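/- arXiv:2202.05804 — 3 statements merged into one kernel-verified Lean document; each statement's English description precedes it below -/
import Mathlib

section
/- Let X ≥ 1. The number of integral solutions of the system x_1 + x_2 + x_3 = y_1 + y_2 + y_3 and x_1² + x_2² + x_3² = y_1² + y_2² + y_3², with 1 ≤ x_i, y_i ≤ X for 1 ≤ i ≤ 3, is O(X³ log(2X)). -/
/-!
With `u = x - y` and `v = x + y` the system reads `∑ uᵢ = 0`, `∑ uᵢ vᵢ = 0`; eliminating `u₃`
leaves `u₁ (v₁ - v₃) = u₂ (v₃ - v₂)`. A solution is therefore determined by `v₃` together with a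
solution of `a₁ b₁ = a₂ b₂` in `[-2X, 2X]`, and the number of those (the multiplicative energy of
that interval) is `O(X² log X)`. Up to signs and zeros, positive solutions are
`(a₁, a₂, b₁, b₂) = (eg, ek, kf, gf)`, and for given `(g, k)` there are `(X / max g k)²` choices of
`(e, f)`; summing over `(g, k)` gives `≪ X² ∑_{n ≤ X} 1/n`.
-/

open Finset
open scoped Combinatorics.Additive

lemma exists_eq_mul_of_mul_eq_mul {α : Type*} [CommMonoidWithZero α] [IsCancelMulZero α]
    [DecompositionMonoid α] {a₁ a₂ b₁ b₂ : α} (ha₁ : a₁ ≠ 0) (h : a₁ * b₁ = a₂ * b₂) :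
    ∃ e g k f, a₁ = e * g ∧ a₂ = e * k ∧ b₁ = k * f ∧ b₂ = g * f := by
  obtain ⟨e, g, ⟨k, rfl⟩, ⟨f, rfl⟩, rfl⟩ := exists_dvd_and_dvd_of_dvd_mul (Dvd.intro _ h)
  refine ⟨e, g, k, f, rfl, rfl, mul_left_cancel₀ ha₁ (h.trans ?_), rfl⟩
  ac_rfl

lemma sum_comp_max_le (N : ℕ) (F : ℕ → ℝ) (hF : ∀ n, 0 ≤ F n) :
    ∑ p ∈ Icc 1 N ×ˢ Icc 1 N, F (max p.1 p.2) ≤ 2 * ∑ n ∈ Icc 1 N, n * F n := by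
  have hsplit : ∀ p : ℕ × ℕ, F (max p.1 p.2) ≤
      (if p.2 ≤ p.1 then F p.1 else 0) + (if p.1 ≤ p.2 then F p.2 else 0) := by
    rintro ⟨g, h⟩
    rcases le_total h g with hhg | hgh
    · simp [hhg, apply_ite, hF]
    · simp [hgh, apply_ite, hF]
  have hhalf : ∀ n ∈ Icc 1 N, ∑ m ∈ Icc 1 N, (if m ≤ n then F n else 0) = n * F n := by
    intro n hn
    have : {m ∈ Icc 1 N | m ≤ n} = Icc 1 n := by
      ext m; simp only [mem_filter, mem_Icc] at hn ⊢; omega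
    rw [← sum_filter, this, sum_const, Nat.card_Icc, add_tsub_cancel_right, nsmul_eq_mul]
  calc ∑ p ∈ Icc 1 N ×ˢ Icc 1 N, F (max p.1 p.2)
      ≤ ∑ p ∈ Icc 1 N ×ˢ Icc 1 N,
          ((if p.2 ≤ p.1 then F p.1 else 0) + (if p.1 ≤ p.2 then F p.2 else 0)) :=
        sum_le_sum fun p _ => hsplit p
    _ = 2 * ∑ n ∈ Icc 1 N, n * F n := by
        rw [sum_add_distrib, sum_product, sum_product_right, sum_congr rfl hhalf, two_mul]

lemma Nat.mulEnergy_Icc_le_sum (N : ℕ) :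
    Eₘ[Icc 1 N] ≤ ∑ p ∈ Icc 1 N ×ˢ Icc 1 N, (N / max p.1 p.2) ^ 2 := by
  let D := (Icc 1 N ×ˢ Icc 1 N).sigma fun p => Icc 1 (N / max p.1 p.2) ×ˢ Icc 1 (N / max p.1 p.2)
  calc Eₘ[Icc 1 N]
      ≤ #D := by
        rw [mulEnergy_eq_card_filter]
        refine card_le_card_of_surjOn
          (fun x : (_ : ℕ × ℕ) × ℕ × ℕ =>
            ((x.2.1 * x.1.1, x.1.2 * x.2.2), (x.2.1 * x.1.2, x.1.1 * x.2.2))) ?_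
        rintro ⟨⟨a₁, b₁⟩, a₂, b₂⟩ hx
        simp only [coe_filter, mem_product, mem_Icc, Set.mem_ofPred_eq] at hx
        obtain ⟨⟨⟨⟨ha₁, ha₁N⟩, hb₁, hb₁N⟩, ⟨ha₂, ha₂N⟩, hb₂, hb₂N⟩, h⟩ := hx
        obtain ⟨e, g, k, f, rfl, rfl, rfl, rfl⟩ :=
          exists_eq_mul_of_mul_eq_mul (Nat.one_le_iff_ne_zero.1 ha₁) h
        refine ⟨⟨(g, k), (e, f)⟩, ?_, rfl⟩
        obtain ⟨he, hg⟩ : 0 < e ∧ 0 < g := CanonicallyOrderedAdd.mul_pos.1 ha₁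
        obtain ⟨hk, hf⟩ : 0 < k ∧ 0 < f := CanonicallyOrderedAdd.mul_pos.1 hb₁
        have hmax : 0 < max g k := lt_max_of_lt_left hg
        simp only [D, coe_sigma, Set.mem_sigma_iff, coe_product, coe_Icc, Set.mem_prod,
          Set.mem_Icc, Nat.le_div_iff_mul_le hmax]
        refine ⟨⟨⟨hg, (Nat.le_mul_of_pos_left g he).trans ha₁N⟩,
          hk, (Nat.le_mul_of_pos_left k he).trans ha₂N⟩,
          ⟨he, ?_⟩, hf, ?_⟩
        · rw [← Nat.mul_max_mul_left]; exact max_le ha₁N ha₂N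
        · rw [mul_comm, ← Nat.mul_max_mul_right]; exact max_le hb₂N hb₁N
    _ = ∑ p ∈ Icc 1 N ×ˢ Icc 1 N, (N / max p.1 p.2) ^ 2 := by
        simp [D, sq]

lemma sum_Icc_inv_le_one_add_log (N : ℕ) : ∑ n ∈ Icc 1 N, (n : ℝ)⁻¹ ≤ 1 + Real.log N := by
  simpa [harmonic_eq_sum_Icc] using harmonic_le_one_add_log N

lemma Nat.mulEnergy_Icc_le (N : ℕ) : (Eₘ[Icc 1 N] : ℝ) ≤ 2 * N ^ 2 * (1 + Real.log N) := by
  have hterm : ∀ n ∈ Icc 1 N, (n : ℝ) * ((N / n : ℕ) : ℝ) ^ 2 ≤ N ^ 2 * (n : ℝ)⁻¹ := by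
    intro n hn
    have hn0 : (n : ℝ) ≠ 0 := by simp at hn ⊢; omega
    calc (n : ℝ) * ((N / n : ℕ) : ℝ) ^ 2 ≤ n * ((N : ℝ) / n) ^ 2 := by gcongr; exact Nat.cast_div_le
      _ = N ^ 2 * (n : ℝ)⁻¹ := by field_simp
  calc (Eₘ[Icc 1 N] : ℝ)
      ≤ ∑ p ∈ Icc 1 N ×ˢ Icc 1 N, ((N / max p.1 p.2 : ℕ) : ℝ) ^ 2 := by
        exact_mod_cast Nat.mulEnergy_Icc_le_sum N
    _ ≤ 2 * ∑ n ∈ Icc 1 N, n * ((N / n : ℕ) : ℝ) ^ 2 :=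
        sum_comp_max_le N (fun n => ((N / n : ℕ) : ℝ) ^ 2) fun _ => by positivity
    _ ≤ 2 * ∑ n ∈ Icc 1 N, N ^ 2 * (n : ℝ)⁻¹ := by gcongr 2 * ?_; exact sum_le_sum hterm
    _ ≤ 2 * N ^ 2 * (1 + Real.log N) := by
        rw [← mul_sum, ← mul_assoc]
        gcongr
        exact sum_Icc_inv_le_one_add_log N

lemma card_filter_mul_eq_zero_le {α : Type*} [MulZeroClass α] [NoZeroDivisors α] [DecidableEq α]
    (s : Finset α) : #{p ∈ s ×ˢ s | p.1 * p.2 = 0} ≤ 2 * #s := by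
  calc #{p ∈ s ×ˢ s | p.1 * p.2 = 0} ≤ #({0} ×ˢ s ∪ s ×ˢ {0}) := by
        refine card_le_card fun p hp => ?_
        simp only [mem_filter, mem_product, mul_eq_zero] at hp
        simp only [mem_union, mem_product, mem_singleton]
        tauto
    _ ≤ 2 * #s := by
        refine (card_union_le _ _).trans ?_
        simp [two_mul]

lemma card_natAbs_fiber_le (s : Finset ((ℤ × ℤ) × ℤ × ℤ)) (w : (ℕ × ℕ) × ℕ × ℕ) :
    #{x ∈ s | ((x.1.1.natAbs, x.1.2.natAbs), x.2.1.natAbs, x.2.2.natAbs) = w} ≤ 16 := by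
  have hsigns : ∀ n : ℕ, #({(n : ℤ), -(n : ℤ)} : Finset ℤ) ≤ 2 := fun _ => card_le_two
  calc #{x ∈ s | ((x.1.1.natAbs, x.1.2.natAbs), x.2.1.natAbs, x.2.2.natAbs) = w}
      ≤ #(({(w.1.1 : ℤ), -(w.1.1 : ℤ)} ×ˢ {(w.1.2 : ℤ), -(w.1.2 : ℤ)}) ×ˢ
          {(w.2.1 : ℤ), -(w.2.1 : ℤ)} ×ˢ {(w.2.2 : ℤ), -(w.2.2 : ℤ)}) := by
        refine card_le_card fun x hx => ?_
        obtain ⟨-, rfl⟩ := mem_filter.1 hx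
        simp only [mem_product, mem_insert, mem_singleton]
        exact ⟨⟨Int.natAbs_eq _, Int.natAbs_eq _⟩, Int.natAbs_eq _, Int.natAbs_eq _⟩
    _ ≤ 2 * 2 * (2 * 2) := by
        simp only [card_product]
        gcongr <;> exact hsigns _

lemma Int.mulEnergy_Icc_le (N : ℕ) :
    (Eₘ[Icc (-N : ℤ) N] : ℝ) ≤ 4 * (2 * N + 1) ^ 2 + 32 * N ^ 2 * (1 + Real.log N) := by
  set S := {x ∈ (Icc (-N : ℤ) N ×ˢ Icc (-N : ℤ) N) ×ˢ Icc (-N : ℤ) N ×ˢ Icc (-N : ℤ) N |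
    x.1.1 * x.1.2 = x.2.1 * x.2.2}
  have hzero : #{x ∈ S | x.1.1 * x.1.2 = 0} ≤ 4 * (2 * N + 1) ^ 2 := by
    set Z := {p ∈ Icc (-N : ℤ) N ×ˢ Icc (-N : ℤ) N | p.1 * p.2 = 0}
    have hZ : #Z ≤ 2 * (2 * N + 1) := by
      convert card_filter_mul_eq_zero_le (Icc (-N : ℤ) N) using 2
      simp only [Int.card_Icc]; omega
    calc #{x ∈ S | x.1.1 * x.1.2 = 0} ≤ #(Z ×ˢ Z) := by
          refine card_le_card fun x hx => ?_
          simp only [S, Z, mem_filter, mem_product] at hx ⊢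
          obtain ⟨⟨⟨hx₁, hx₂⟩, heq⟩, hzero⟩ := hx
          exact ⟨⟨hx₁, hzero⟩, hx₂, heq ▸ hzero⟩
      _ ≤ 2 * (2 * N + 1) * (2 * (2 * N + 1)) := by rw [card_product]; gcongr
      _ = 4 * (2 * N + 1) ^ 2 := by ring
  have hnonzero : #{x ∈ S | ¬ x.1.1 * x.1.2 = 0} ≤ 16 * Eₘ[Icc 1 N] := by
    rw [mulEnergy_eq_card_filter]
    refine card_le_mul_card_image_of_maps_to (f := fun x : (ℤ × ℤ) × ℤ × ℤ =>
      ((x.1.1.natAbs, x.1.2.natAbs), x.2.1.natAbs, x.2.2.natAbs)) ?_ 16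
      fun w _ => card_natAbs_fiber_le _ w
    intro x hx
    simp only [S, mem_filter, mem_product, mem_Icc, mul_eq_zero, not_or] at hx ⊢
    obtain ⟨⟨⟨⟨⟨ha₁, ha₁'⟩, hb₁, hb₁'⟩, ⟨ha₂, ha₂'⟩, hb₂, hb₂'⟩, heq⟩, ha₁0, hb₁0⟩ := hx
    have ha₂0 : x.2.1 ≠ 0 := fun h => by simp [h, ha₁0, hb₁0] at heq
    have hb₂0 : x.2.2 ≠ 0 := fun h => by simp [h, ha₁0, hb₁0] at heq
    refine ⟨⟨⟨⟨?_, ?_⟩, ?_, ?_⟩, ⟨?_, ?_⟩, ?_, ?_⟩, ?_⟩ <;> try omega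
    rw [← Int.natAbs_mul, ← Int.natAbs_mul, heq]
  have hcard : Eₘ[Icc (-N : ℤ) N] ≤ 4 * (2 * N + 1) ^ 2 + 16 * Eₘ[Icc 1 N] := by
    rw [mulEnergy_eq_card_filter,
      ← card_filter_add_card_filter_not (p := fun x : (ℤ × ℤ) × ℤ × ℤ => x.1.1 * x.1.2 = 0)]
    exact add_le_add hzero hnonzero
  calc (Eₘ[Icc (-N : ℤ) N] : ℝ) ≤ 4 * (2 * N + 1) ^ 2 + 16 * Eₘ[Icc 1 N] := by
        exact_mod_cast hcard
    _ ≤ 4 * (2 * N + 1) ^ 2 + 32 * N ^ 2 * (1 + Real.log N) := by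
        linarith [Nat.mulEnergy_Icc_le N]

noncomputable def quadraticSystemSolutions (M : ℤ) : Finset ((Fin 3 → ℤ) × (Fin 3 → ℤ)) :=
  {p ∈ (Fintype.piFinset fun _ => Icc 1 M) ×ˢ (Fintype.piFinset fun _ => Icc 1 M) |
    (∑ i, p.1 i = ∑ i, p.2 i) ∧ (∑ i, (p.1 i) ^ 2 = ∑ i, (p.2 i) ^ 2)}

lemma card_quadraticSystemSolutions_le (M : ℕ) :
    #(quadraticSystemSolutions M) ≤ Eₘ[Icc (-(2 * M : ℕ) : ℤ) (2 * M : ℕ)] * (2 * M) := by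
  set I := Icc (-(2 * M : ℕ) : ℤ) (2 * M : ℕ)
  have hv : #(Icc (1 : ℤ) (2 * M)) = 2 * M := by simp only [Int.card_Icc]; omega
  rw [mulEnergy_eq_card_filter, ← hv, ← card_product]
  refine card_le_card_of_injOn (fun p =>
    (((p.1 0 - p.2 0, (p.1 0 + p.2 0) - (p.1 2 + p.2 2)),
      (p.1 1 - p.2 1, (p.1 2 + p.2 2) - (p.1 1 + p.2 1))), p.1 2 + p.2 2)) ?_ ?_
  · intro p hp
    simp only [quadraticSystemSolutions, coe_filter, Set.mem_ofPred_eq, mem_product,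
      Fintype.mem_piFinset, mem_Icc, Fin.sum_univ_three] at hp
    obtain ⟨⟨hx, hy⟩, hsum, hsq⟩ := hp
    have := hx 0; have := hx 1; have := hx 2; have := hy 0; have := hy 1; have := hy 2
    simp only [I, coe_product, coe_filter, Set.mem_prod, Set.mem_ofPred_eq, mem_product,
      mem_Icc, coe_Icc, Set.mem_Icc]
    refine ⟨⟨⟨⟨⟨?_, ?_⟩, ?_, ?_⟩, ⟨?_, ?_⟩, ?_, ?_⟩, ?_⟩, ?_, ?_⟩ <;> try omega
    linear_combination hsq - (p.1 2 + p.2 2) * hsum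
  · intro p hp q hq hpq
    simp only [quadraticSystemSolutions, coe_filter, Set.mem_ofPred_eq, mem_product,
      Fin.sum_univ_three] at hp hq
    simp only [Prod.mk.injEq] at hpq
    ext i <;> fin_cases i <;>
      simp only [Fin.zero_eta, Fin.mk_one, Fin.reduceFinMk, Fin.isValue] <;> omega

lemma card_quadraticSystemSolutions_le_mul_log (M : ℕ) (hM : 1 ≤ M) :
    (#(quadraticSystemSolutions M) : ℝ) ≤ M ^ 3 * (456 + 256 * Real.log (2 * M)) := by
  have hM' : (1 : ℝ) ≤ M := by exact_mod_cast hM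
  have hlog : 0 ≤ Real.log (2 * M) := Real.log_nonneg (by linarith)
  calc (#(quadraticSystemSolutions M) : ℝ)
      ≤ Eₘ[Icc (-(2 * M : ℕ) : ℤ) (2 * M : ℕ)] * (2 * M) := by
        exact_mod_cast card_quadraticSystemSolutions_le M
    _ ≤ (4 * (2 * (2 * M) + 1) ^ 2 + 32 * (2 * M) ^ 2 * (1 + Real.log (2 * M))) * (2 * M) := by
        gcongr
        exact_mod_cast Int.mulEnergy_Icc_le (2 * M)
    _ ≤ M ^ 3 * (456 + 256 * Real.log (2 * M)) := by
        nlinarith [mul_nonneg (pow_nonneg (by positivity : (0 : ℝ) ≤ M) 3) hlog]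

theorem quadratic_vinogradov_count :
    ∃ C : ℝ, 0 < C ∧ ∀ X : ℝ, 1 ≤ X →
      ((Finset.filter
          (fun p : (Fin 3 → ℤ) × (Fin 3 → ℤ) =>
            (∑ i, p.1 i = ∑ i, p.2 i) ∧ (∑ i, (p.1 i) ^ 2 = ∑ i, (p.2 i) ^ 2))
          ((Fintype.piFinset fun _ => Finset.Icc 1 ⌊X⌋) ×ˢ
            (Fintype.piFinset fun _ => Finset.Icc 1 ⌊X⌋))).card : ℝ)
        ≤ C * X ^ 3 * Real.log (2 * X) := by
  refine ⟨1168, by norm_num, fun X hX => ?_⟩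
  have hM : 1 ≤ ⌊X⌋₊ := Nat.le_floor (by simpa using hX)
  have hMX : (⌊X⌋₊ : ℝ) ≤ X := Nat.floor_le (by linarith)
  have hlog : Real.log (2 * ⌊X⌋₊) ≤ Real.log (2 * X) :=
    Real.log_le_log (by positivity) (by linarith)
  have hlog_two : 1 / 2 < Real.log (2 * X) :=
    lt_of_lt_of_le (by linarith [Real.log_two_gt_d9]) (Real.log_le_log two_pos (by linarith))
  have hlog_nonneg : 0 ≤ Real.log (2 * ⌊X⌋₊) := Real.log_nonneg (by norm_cast; omega)
  change (#(quadraticSystemSolutions ⌊X⌋) : ℝ) ≤ _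
  rw [← Int.natCast_floor_eq_floor (by linarith)]
  calc (#(quadraticSystemSolutions ⌊X⌋₊) : ℝ)
      ≤ ⌊X⌋₊ ^ 3 * (456 + 256 * Real.log (2 * ⌊X⌋₊)) :=
        card_quadraticSystemSolutions_le_mul_log _ hM
    _ ≤ X ^ 3 * (1168 * Real.log (2 * X)) := by gcongr; linarith
    _ = 1168 * X ^ 3 * Real.log (2 * X) := by ring
end

section
/- Let X ≥ 2 and Q with 1 ≤ Q ≤ X, and let 𝔐 = 𝔐(Q) be the one-dimensional major arcs in the α₃ variable. Then ∫_𝔐 ∫_0^1 ∫_0^1 |f(α; X)|⁶ dα ≪_ε Q² X^ε, where f(α; X) = ∑_{1 ≤ x ≤ X} e(α₁x + α₂x² + α₃x³). -/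
/-!
Expanding `|f|⁶` and integrating over `α₁` and `α₂` by orthogonality leaves, for each `α₃`, a sum
of unimodular terms over the solutions of the quadratic Vinogradov system
`x₀ + x₁ + x₂ = y₀ + y₁ + y₂`, `x₀² + x₁² + x₂² = y₀² + y₁² + y₂²` in `[1, X]`. The number of
these solutions is `≪ X³ log² X`: a solution is determined by `y₀ + y₁` and four integers of
size `O(X)` with `u v = h K`, and the number of such quadruples in `[-M, M]` (the multiplicative
energy of the interval) is `≪ M² log² M`, by the four-number lemma and the harmonic sum. The
major arcs are `≤ Q` unions of `q + 1` intervals of length `2Q / (q X³)`, of total measure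
`≤ 4 Q² / X³`.
-/

open MeasureTheory Finset
open scoped Combinatorics.Additive

namespace Vinogradov

section Character

open Complex Real

noncomputable def e (θ : ℝ) : ℂ := Complex.exp (2 * π * I * θ)

lemma e_add (θ φ : ℝ) : e (θ + φ) = e θ * e φ := by
  rw [e, e, e, ← Complex.exp_add]; push_cast; ring_nf

lemma conj_e (θ : ℝ) : starRingEnd ℂ (e θ) = e (-θ) := by
  rw [e, e, ← Complex.exp_conj]; simp [map_ofNat]

lemma norm_e (θ : ℝ) : ‖e θ‖ = 1 := by
  rw [e, Complex.norm_exp]; simp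

lemma e_intCast (n : ℤ) : e n = 1 := by
  rw [e, ← Complex.exp_int_mul_two_pi_mul_I n]; push_cast; ring_nf

@[fun_prop]
lemma continuous_e : Continuous e := by unfold e; fun_prop

lemma integral_e_mul_intCast (n : ℤ) :
    ∫ t in (0:ℝ)..1, e (t * n) = if n = 0 then 1 else 0 := by
  split_ifs with hn
  · simp [hn, e]
  · have hc : 2 * π * I * n ≠ 0 := by simp [pi_ne_zero, I_ne_zero, hn]
    have := integral_exp_mul_complex (a := (0:ℝ)) (b := 1) hc
    simp only [e]
    push_cast
    simp_rw [show ∀ t : ℝ, 2 * π * I * (t * n) = 2 * π * I * n * t from fun t => by ring]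
    have hn1 : Complex.exp (2 * π * I * n) = 1 := by simpa [e] using e_intCast n
    simp [this, hn1]

lemma integral_sum_e_mul {ι : Type*} (s : Finset ι) (L : ι → ℤ) (g : ι → ℂ) :
    ∫ t in (0:ℝ)..1, ∑ a ∈ s, e (t * L a) * g a = ∑ a ∈ s with L a = 0, g a := by
  rw [intervalIntegral.integral_finsetSum
    (fun a _ => (by fun_prop : Continuous fun t : ℝ => e (t * L a) * g a).intervalIntegrable _ _),
    sum_filter]
  refine sum_congr rfl fun a _ => ?_
  rw [intervalIntegral.integral_mul_const, integral_e_mul_intCast, ite_mul, one_mul, zero_mul]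

lemma e_sum {ι : Type*} (s : Finset ι) (θ : ι → ℝ) : e (∑ i ∈ s, θ i) = ∏ i ∈ s, e (θ i) := by
  simp only [e, ofReal_sum, mul_sum, Complex.exp_sum]

lemma sum_e_pow {ι : Type*} (s : Finset ι) (φ : ι → ℝ) (k : ℕ) :
    (∑ x ∈ s, e (φ x)) ^ k = ∑ x ∈ Fintype.piFinset (fun _ : Fin k => s), e (∑ i, φ (x i)) := by
  simp only [← Fin.prod_const, prod_univ_sum, e_sum]

lemma norm_sum_e_pow_two_mul {ι : Type*} (s : Finset ι) (φ : ι → ℝ) (k : ℕ) :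
    ((‖∑ x ∈ s, e (φ x)‖ ^ (2 * k) : ℝ) : ℂ) =
      ∑ p ∈ Fintype.piFinset (fun _ : Fin k => s) ×ˢ Fintype.piFinset (fun _ : Fin k => s),
        e (∑ i, φ (p.1 i) - ∑ i, φ (p.2 i)) := by
  have hconj : starRingEnd ℂ (∑ x ∈ s, e (φ x)) = ∑ x ∈ s, e (-φ x) := by
    simp only [map_sum, conj_e]
  rw [pow_mul, ofReal_pow, ofReal_pow, ← mul_conj', mul_pow, hconj, sum_e_pow, sum_e_pow,
    sum_mul_sum, sum_product]
  simp only [sum_neg_distrib, sub_eq_add_neg, e_add]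

end Character

def powerSumDiff {k : ℕ} (j : ℕ) (p : (Fin k → ℕ) × (Fin k → ℕ)) : ℤ :=
  ∑ i, (p.1 i : ℤ) ^ j - ∑ i, (p.2 i : ℤ) ^ j

def pairBox (k N : ℕ) : Finset ((Fin k → ℕ) × (Fin k → ℕ)) :=
  Fintype.piFinset (fun _ => Icc 1 N) ×ˢ Fintype.piFinset (fun _ => Icc 1 N)

def quadVinogradovSolutions (k N : ℕ) : Finset ((Fin k → ℕ) × (Fin k → ℕ)) :=
  {p ∈ pairBox k N | powerSumDiff 1 p = 0 ∧ powerSumDiff 2 p = 0}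

lemma integral_integral_norm_sum_e_pow_eq (k N : ℕ) (α₃ : ℝ) :
    ((∫ α₂ in (0:ℝ)..1, ∫ α₁ in (0:ℝ)..1,
        ‖∑ x ∈ Icc 1 N, e (α₁ * x + α₂ * x ^ 2 + α₃ * x ^ 3)‖ ^ (2 * k) : ℝ) : ℂ) =
      ∑ p ∈ quadVinogradovSolutions k N, e (α₃ * powerSumDiff 3 p) := by
  have hphase : ∀ α₁ α₂ : ℝ, ∀ p : (Fin k → ℕ) × (Fin k → ℕ),
      e (∑ i, (α₁ * p.1 i + α₂ * p.1 i ^ 2 + α₃ * p.1 i ^ 3) -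
          ∑ i, (α₁ * p.2 i + α₂ * p.2 i ^ 2 + α₃ * p.2 i ^ 3)) =
        e (α₁ * powerSumDiff 1 p) * (e (α₂ * powerSumDiff 2 p) * e (α₃ * powerSumDiff 3 p)) := by
    intro α₁ α₂ p
    rw [← e_add, ← e_add]
    congr 1
    simp only [powerSumDiff, sum_add_distrib, ← mul_sum, pow_one]
    push_cast
    ring
  simp_rw [← intervalIntegral.integral_ofReal, norm_sum_e_pow_two_mul, hphase]
  rw [intervalIntegral.integral_congr fun α₂ _ => integral_sum_e_mul _ _ _, integral_sum_e_mul,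
    filter_filter]
  rfl

def hyperbolaPoints (M : ℕ) : Finset (ℕ × ℕ) := {p ∈ Icc 1 M ×ˢ Icc 1 M | p.1 * p.2 ≤ M}

lemma mk_mem_hyperbolaPoints {M a b : ℕ} (hpos : 1 ≤ a * b) (hle : a * b ≤ M) :
    (a, b) ∈ hyperbolaPoints M := by
  have ha : 0 < a := Nat.pos_of_mul_pos_right hpos
  have hb : 0 < b := Nat.pos_of_mul_pos_left hpos
  simp only [hyperbolaPoints, mem_filter, mem_product, mem_Icc]
  exact ⟨⟨⟨ha, (Nat.le_mul_of_pos_right a hb).trans hle⟩,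
    ⟨hb, (Nat.le_mul_of_pos_left b ha).trans hle⟩⟩, hle⟩

lemma card_hyperbolaPoints_le_sum_div (M : ℕ) : #(hyperbolaPoints M) ≤ ∑ a ∈ Icc 1 M, M / a := by
  rw [card_eq_sum_card_fiberwise (f := Prod.fst) (s := hyperbolaPoints M) (t := Icc 1 M) fun p hp =>
    (mem_product.1 (mem_filter.1 hp).1).1]
  refine sum_le_sum fun a ha => ?_
  calc #{p ∈ hyperbolaPoints M | p.1 = a} ≤ #(Icc 1 (M / a)) := by
        refine card_le_card_of_injOn Prod.snd (fun p hp => ?_) fun p hp q hq hpq => ?_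
        · simp only [hyperbolaPoints, mem_coe, mem_filter, mem_product, mem_Icc] at hp ⊢
          obtain ⟨⟨⟨hp1, hp2⟩, hle⟩, rfl⟩ := hp
          exact ⟨hp2.1, (Nat.le_div_iff_mul_le hp1.1).2 (by rwa [mul_comm])⟩
        · simp only [mem_coe, mem_filter] at hp hq
          exact Prod.ext (hp.2.trans hq.2.symm) hpq
    _ = M / a := by simp

lemma card_hyperbolaPoints_le (M : ℕ) : (#(hyperbolaPoints M) : ℝ) ≤ M * (1 + Real.log M) :=
  calc (#(hyperbolaPoints M) : ℝ) ≤ ∑ a ∈ Icc 1 M, ((M / a : ℕ) : ℝ) := by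
        exact_mod_cast card_hyperbolaPoints_le_sum_div M
    _ ≤ ∑ a ∈ Icc 1 M, (M : ℝ) * (a : ℝ)⁻¹ :=
        sum_le_sum fun a _ => by rw [← div_eq_mul_inv]; exact Nat.cast_div_le
    _ = M * harmonic M := by rw [← mul_sum, harmonic_eq_sum_Icc]; push_cast; rfl
    _ ≤ M * (1 + Real.log M) := by gcongr; exact harmonic_le_one_add_log M

lemma mulEnergy_Icc_one_le (M : ℕ) : Eₘ[Icc 1 M, Icc 1 M] ≤ #(hyperbolaPoints M) ^ 2 := by
  rw [sq, ← card_product, mulEnergy]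
  refine card_le_card_of_surjOn
    (fun r => ((r.1.1 * r.1.2, r.1.1 * r.2.1), (r.2.1 * r.2.2, r.1.2 * r.2.2))) ?_
  rintro ⟨⟨a₁, a₂⟩, ⟨b₁, b₂⟩⟩ hq
  simp only [coe_filter, mem_product, mem_Icc, Set.mem_ofPred_eq] at hq
  obtain ⟨⟨⟨⟨ha₁, ha₁M⟩, -⟩, ⟨hb₁, hb₁M⟩, -⟩, heq⟩ := hq
  -- four-number lemma: `a₁ b₁ = a₂ b₂` factors as `a₁ = g a', a₂ = g c', b₁ = c' m, b₂ = a' m`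
  obtain ⟨g, a', ⟨c', rfl⟩, ⟨m, rfl⟩, rfl⟩ := exists_dvd_and_dvd_of_dvd_mul (Dvd.intro b₁ heq)
  obtain rfl : b₁ = c' * m :=
    Nat.eq_of_mul_eq_mul_left ha₁ (by rw [heq]; ring)
  exact ⟨((g, a'), (c', m)),
    mem_product.2 ⟨mk_mem_hyperbolaPoints ha₁ ha₁M, mk_mem_hyperbolaPoints hb₁ hb₁M⟩, rfl⟩

lemma card_filter_mul_eq_zero_le (M : ℕ) :
    #{p ∈ Icc (-M : ℤ) M ×ˢ Icc (-M : ℤ) M | p.1 * p.2 = 0} ≤ 4 * M + 2 :=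
  calc _ ≤ #(({0} ×ˢ Icc (-M : ℤ) M) ∪ (Icc (-M : ℤ) M ×ˢ {0})) := card_le_card fun p hp => by
        simp only [mem_filter, mem_product, mul_eq_zero] at hp
        simp only [mem_union, mem_product, mem_singleton]
        tauto
    _ ≤ 4 * M + 2 := (card_union_le _ _).trans (by simp; omega)

lemma card_filter_natAbs_eq_le (s : Finset ((ℤ × ℤ) × ℤ × ℤ)) (t : (ℕ × ℕ) × ℕ × ℕ) :
    #{q ∈ s | ((q.1.1.natAbs, q.1.2.natAbs), (q.2.1.natAbs, q.2.2.natAbs)) = t} ≤ 16 :=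
  calc _ ≤ #(({(t.1.1 : ℤ), -(t.1.1 : ℤ)} ×ˢ {(t.1.2 : ℤ), -(t.1.2 : ℤ)}) ×ˢ
        ({(t.2.1 : ℤ), -(t.2.1 : ℤ)} ×ˢ {(t.2.2 : ℤ), -(t.2.2 : ℤ)})) := card_le_card fun q hq => by
        obtain ⟨-, rfl⟩ := mem_filter.1 hq
        simp only [mem_product, mem_insert, mem_singleton]
        exact ⟨⟨Int.natAbs_eq _, Int.natAbs_eq _⟩, Int.natAbs_eq _, Int.natAbs_eq _⟩
    _ ≤ 2 * 2 * (2 * 2) := by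
        simp only [card_product]
        exact Nat.mul_le_mul (Nat.mul_le_mul card_le_two card_le_two)
          (Nat.mul_le_mul card_le_two card_le_two)

lemma mulEnergy_Icc_neg_le (M : ℕ) :
    Eₘ[Icc (-M : ℤ) M, Icc (-M : ℤ) M] ≤ (4 * M + 2) ^ 2 + 16 * Eₘ[Icc 1 M, Icc 1 M] := by
  rw [mulEnergy, mulEnergy, ← card_filter_add_card_filter_not (p := fun q => q.1.1 * q.2.1 = 0),
    filter_filter, filter_filter]
  -- Quadruples with zero products pair up two zero-product pairs; the others are determined, up
  -- to signs, by their absolute values.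
  gcongr
  · set Z := {p ∈ Icc (-M : ℤ) M ×ˢ Icc (-M : ℤ) M | p.1 * p.2 = 0}
    have hZ : #Z ≤ 4 * M + 2 := card_filter_mul_eq_zero_le M
    calc _ ≤ #(Z ×ˢ Z) := ?_
      _ ≤ (4 * M + 2) ^ 2 := by rw [card_product, sq]; exact Nat.mul_le_mul hZ hZ
    refine card_le_card_of_injOn (fun q => ((q.1.1, q.2.1), (q.1.2, q.2.2))) (fun q hq => ?_)
      fun q _ r _ h => ?_
    · simp only [Z, coe_filter, mem_product, Set.mem_ofPred_eq, mem_coe, mem_filter] at hq ⊢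
      obtain ⟨⟨⟨h1, h2⟩, h3, h4⟩, heq, hz⟩ := hq
      exact ⟨⟨⟨h1, h3⟩, hz⟩, ⟨h2, h4⟩, heq ▸ hz⟩
    · simp only [Prod.mk.injEq] at h
      ext <;> simp [h]
  · refine (card_le_mul_card_image _ 16 fun t _ => card_filter_natAbs_eq_le _ t).trans
      (Nat.mul_le_mul_left _ (card_le_card fun t ht => ?_))
    obtain ⟨⟨⟨a₁, a₂⟩, b₁, b₂⟩, hq, rfl⟩ := mem_image.1 ht
    simp only [mem_filter, mem_product, mem_Icc, mul_eq_zero, not_or] at hq ⊢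
    obtain ⟨⟨⟨⟨h1, h2⟩, h3, h4⟩, h5, h6⟩, heq, ha, hb⟩ := hq
    have habs : a₁.natAbs * b₁.natAbs = a₂.natAbs * b₂.natAbs := by
      rw [← Int.natAbs_mul, ← Int.natAbs_mul, heq]
    have ha₂ : a₂ ≠ 0 := by rintro rfl; simp_all
    have hb₂ : b₂ ≠ 0 := by rintro rfl; simp_all
    refine ⟨⟨⟨⟨?_, ?_⟩, ?_, ?_⟩, ?_, ?_⟩, habs⟩ <;> omega

lemma mem_quadVinogradovSolutions_three {N : ℕ} {x y : Fin 3 → ℕ} :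
    (x, y) ∈ quadVinogradovSolutions 3 N ↔
      ((∀ i, x i ∈ Icc 1 N) ∧ ∀ i, y i ∈ Icc 1 N) ∧
      (x 0 + x 1 + x 2 : ℤ) = y 0 + y 1 + y 2 ∧
      (x 0 ^ 2 + x 1 ^ 2 + x 2 ^ 2 : ℤ) = y 0 ^ 2 + y 1 ^ 2 + y 2 ^ 2 := by
  simp [quadVinogradovSolutions, pairBox, powerSumDiff, Fin.sum_univ_three, sub_eq_zero]

lemma card_quadVinogradovSolutions_three_le (N : ℕ) :
    #(quadVinogradovSolutions 3 N) ≤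
      Eₘ[Icc (-(5 * N : ℕ) : ℤ) (5 * N : ℕ), Icc (-(5 * N : ℕ) : ℤ) (5 * N : ℕ)] * (2 * N) := by
  set I := Icc (-(5 * N : ℕ) : ℤ) (5 * N : ℕ)
  calc #(quadVinogradovSolutions 3 N)
      ≤ #({q ∈ (I ×ˢ I) ×ˢ I ×ˢ I | q.1.1 * q.2.1 = q.1.2 * q.2.2} ×ˢ Icc 1 (2 * N)) := ?_
    _ = _ := by rw [card_product, Nat.card_Icc, Nat.add_sub_cancel]; rfl
  -- With `B = x₀ - x₁`, `D = y₀ - y₁`, `h = y₂ - x₂` and `C = y₀ + y₁`, the system says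
  -- `x₀ + x₁ = C + h` and `B² - D² = h (2 (x₂ + y₂) - 2 C - h)`.
  let invariants : (Fin 3 → ℕ) × (Fin 3 → ℕ) → ((ℤ × ℤ) × ℤ × ℤ) × ℕ := fun ⟨x, y⟩ =>
    (((x 0 - x 1 - (y 0 - y 1), y 2 - x 2),
      (x 0 - x 1 + (y 0 - y 1), 2 * (x 2 + y 2) - 2 * (y 0 + y 1) - (y 2 - x 2))), y 0 + y 1)
  refine card_le_card_of_injOn invariants (fun ⟨x, y⟩ hp => ?_) fun ⟨x, y⟩ hp ⟨x', y'⟩ hq hpq => ?_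
  · obtain ⟨⟨hx, hy⟩, h1, h2⟩ := mem_quadVinogradovSolutions_three.1 hp
    have := hx 0; have := hx 1; have := hx 2; have := hy 0; have := hy 1; have := hy 2
    simp only [mem_Icc, mem_coe, mem_product, mem_filter, I, invariants] at *
    refine ⟨⟨⟨⟨⟨?_, ?_⟩, ?_, ?_⟩, ?_, ?_⟩, ?_⟩, ?_, ?_⟩
    all_goals try omega
    linear_combination 2 * h2 - (x 0 + x 1 + y 0 + y 1 + y 2 - x 2 : ℤ) * h1
  · obtain ⟨-, h1, -⟩ := mem_quadVinogradovSolutions_three.1 hp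
    obtain ⟨-, h1', -⟩ := mem_quadVinogradovSolutions_three.1 hq
    simp only [invariants, Prod.mk.injEq] at hpq
    refine Prod.ext (funext fun i => ?_) (funext fun i => ?_) <;> fin_cases i <;> simp <;> omega

lemma card_quadVinogradovSolutions_three_le_log (N : ℕ) (hN : 1 ≤ N) :
    (#(quadVinogradovSolutions 3 N) : ℝ) ≤ 1768 * N ^ 3 * (1 + Real.log (5 * N)) ^ 2 := by
  have hcount := card_quadVinogradovSolutions_three_le N
  have henergy := mulEnergy_Icc_neg_le (5 * N)
  have hpos := mulEnergy_Icc_one_le (5 * N)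
  have hhyp := card_hyperbolaPoints_le (5 * N)
  have hn : (1 : ℝ) ≤ N := by exact_mod_cast hN
  set L := 1 + Real.log (5 * N)
  have hL : 1 ≤ L := by
    have := Real.log_nonneg (by linarith : (1 : ℝ) ≤ 5 * N); linarith
  push_cast at hhyp
  calc (#(quadVinogradovSolutions 3 N) : ℝ)
      ≤ ((4 * (5 * N) + 2) ^ 2 + 16 * (#(hyperbolaPoints (5 * N)) : ℝ) ^ 2) * (2 * N) := by
        exact_mod_cast hcount.trans (Nat.mul_le_mul_right _ (henergy.trans (by gcongr)))
    _ ≤ (484 * N ^ 2 * L ^ 2 + 16 * (5 * N * L) ^ 2) * (2 * N) := by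
        gcongr
        calc (4 * (5 * N) + 2 : ℝ) ^ 2 ≤ 484 * N ^ 2 * 1 := by nlinarith
          _ ≤ 484 * N ^ 2 * L ^ 2 := by gcongr; exact one_le_pow₀ hL
    _ = 1768 * N ^ 3 * L ^ 2 := by ring

lemma one_add_log_sq_le {ε x : ℝ} (hε : 0 < ε) (hx : 1 ≤ x) :
    (1 + Real.log x) ^ 2 ≤ (1 + 2 / ε) ^ 2 * x ^ ε := by
  have hone : 1 ≤ x ^ (ε / 2) := Real.one_le_rpow hx (by positivity)
  have hlog : Real.log x ≤ 2 / ε * x ^ (ε / 2) :=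
    calc Real.log x ≤ x ^ (ε / 2) / (ε / 2) := Real.log_le_rpow_div (by linarith) (half_pos hε)
      _ = 2 / ε * x ^ (ε / 2) := by field_simp
  calc (1 + Real.log x) ^ 2 ≤ ((1 + 2 / ε) * x ^ (ε / 2)) ^ 2 := by
        have := Real.log_nonneg hx
        gcongr
        nlinarith
    _ = (1 + 2 / ε) ^ 2 * x ^ ε := by
        rw [mul_pow, ← Real.rpow_natCast (x ^ (ε / 2)), ← Real.rpow_mul (by linarith)]
        norm_num

lemma card_quadVinogradovSolutions_three_le_rpow {ε : ℝ} (hε : 0 < ε) (N : ℕ) (hN : 1 ≤ N) :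
    (#(quadVinogradovSolutions 3 N) : ℝ) ≤
      1768 * (1 + 2 / ε) ^ 2 * 5 ^ ε * N ^ 3 * (N : ℝ) ^ ε := by
  have h5N : (1 : ℝ) ≤ 5 * N := by
    have : (1 : ℝ) ≤ N := by exact_mod_cast hN
    linarith
  calc (#(quadVinogradovSolutions 3 N) : ℝ) ≤ 1768 * N ^ 3 * (1 + Real.log (5 * N)) ^ 2 :=
        card_quadVinogradovSolutions_three_le_log N hN
    _ ≤ 1768 * N ^ 3 * ((1 + 2 / ε) ^ 2 * (5 * N) ^ ε) := by gcongr; exact one_add_log_sq_le hε h5N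
    _ = _ := by rw [Real.mul_rpow (by norm_num) (by positivity)]; ring

lemma norm_sum_e_le_card {ι : Type*} (s : Finset ι) (θ : ι → ℝ) : ‖∑ a ∈ s, e (θ a)‖ ≤ #s :=
  (norm_sum_le _ _).trans (by simp [norm_e])

lemma norm_integral_integral_le_card (k N : ℕ) (α₃ : ℝ) :
    ‖∫ α₂ in (0:ℝ)..1, ∫ α₁ in (0:ℝ)..1,
        ‖∑ x ∈ Icc 1 N, e (α₁ * x + α₂ * x ^ 2 + α₃ * x ^ 3)‖ ^ (2 * k)‖ ≤
      #(quadVinogradovSolutions k N) := by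
  rw [← Complex.norm_real, integral_integral_norm_sum_e_pow_eq]
  exact norm_sum_e_le_card _ _

def majorArcs (Q δ : ℝ) : Set ℝ :=
  {α | α ∈ Set.Ico (0:ℝ) 1 ∧ ∃ (q : ℕ) (a : ℕ), 1 ≤ q ∧ (q : ℝ) ≤ Q ∧ a ≤ q ∧ Nat.gcd a q = 1 ∧
    |(q : ℝ) * α - a| ≤ δ}

lemma majorArcs_subset (Q δ : ℝ) :
    majorArcs Q δ ⊆
      ⋃ q ∈ Icc 1 ⌊Q⌋₊, ⋃ a ∈ range (q + 1), Metric.closedBall ((a : ℝ) / q) (δ / q) := by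
  rintro α ⟨-, q, a, hq, hqQ, haq, -, hα⟩
  have hq0 : (0 : ℝ) < q := by exact_mod_cast hq
  simp only [Set.mem_iUnion, mem_Icc, mem_range, Metric.mem_closedBall, Real.dist_eq]
  refine ⟨q, ⟨hq, Nat.le_floor hqQ⟩, a, by omega, ?_⟩
  rw [show (q : ℝ) * α - a = q * (α - a / q) by rw [mul_sub, mul_div_cancel₀ _ hq0.ne'], abs_mul,
    abs_of_pos hq0] at hα
  rwa [le_div_iff₀ hq0, mul_comm]

lemma volume_majorArcs_le {Q δ : ℝ} (hQ : 0 ≤ Q) (hδ : 0 ≤ δ) :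
    volume (majorArcs Q δ) ≤ ENNReal.ofReal (4 * Q * δ) :=
  calc volume (majorArcs Q δ)
      ≤ ∑ q ∈ Icc 1 ⌊Q⌋₊, ∑ a ∈ range (q + 1), volume (Metric.closedBall ((a : ℝ) / q) (δ / q)) :=
        (measure_mono (majorArcs_subset Q δ)).trans ((measure_biUnion_finset_le _ _).trans
          (sum_le_sum fun q _ => measure_biUnion_finset_le _ _))
    _ ≤ ∑ q ∈ Icc 1 ⌊Q⌋₊, ENNReal.ofReal (4 * δ) := sum_le_sum fun q hq => by
        have hq1 : (1 : ℝ) ≤ q := by exact_mod_cast (mem_Icc.1 hq).1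
        simp only [Real.volume_closedBall, sum_const, card_range, nsmul_eq_mul]
        rw [← ENNReal.ofReal_natCast, ← ENNReal.ofReal_mul (by positivity)]
        refine ENNReal.ofReal_le_ofReal ?_
        push_cast
        rw [show ((q : ℝ) + 1) * (2 * (δ / q)) = 2 * δ + 2 * δ / q by field_simp]
        linarith [div_le_self (by positivity : 0 ≤ 2 * δ) hq1]
    _ = ENNReal.ofReal (⌊Q⌋₊ * (4 * δ)) := by
        rw [sum_const, Nat.card_Icc, Nat.add_sub_cancel, nsmul_eq_mul, ← ENNReal.ofReal_natCast,
          ← ENNReal.ofReal_mul (by positivity)]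
    _ ≤ ENNReal.ofReal (4 * Q * δ) :=
        ENNReal.ofReal_le_ofReal (by nlinarith [Nat.floor_le hQ])

end Vinogradov

open Vinogradov in
theorem major_arc_sixth_moment :
    ∀ ε : ℝ, 0 < ε → ∃ C : ℝ, 0 < C ∧
      ∀ (X Q : ℝ), 2 ≤ X → 1 ≤ Q → Q ≤ X →
        (∫ α₃ in {α : ℝ | α ∈ Set.Ico (0:ℝ) 1 ∧
            ∃ (q : ℕ) (a : ℕ), 1 ≤ q ∧ (q : ℝ) ≤ Q ∧ a ≤ q ∧ Nat.gcd a q = 1 ∧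
              |(q : ℝ) * α - a| ≤ Q / X ^ 3},
          ∫ α₂ in (0:ℝ)..1, ∫ α₁ in (0:ℝ)..1,
            ‖(∑ x ∈ Finset.Icc 1 ⌊X⌋₊,
                Complex.exp (2 * Real.pi * Complex.I *
                  ((α₁ : ℂ) * (x : ℂ) + (α₂ : ℂ) * (x : ℂ) ^ 2 +
                    (α₃ : ℂ) * (x : ℂ) ^ 3)))‖ ^ 6)
          ≤ C * Q ^ 2 * X ^ ε := by
  intro ε hε
  set A := 1768 * (1 + 2 / ε) ^ 2 * 5 ^ ε
  refine ⟨4 * A, by positivity, fun X Q hX hQ _ => ?_⟩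
  have hN : 1 ≤ ⌊X⌋₊ := Nat.le_floor (by push_cast; linarith)
  have hNX : (⌊X⌋₊ : ℝ) ≤ X := Nat.floor_le (by linarith)
  have hvol := volume_majorArcs_le (by linarith : 0 ≤ Q) (by positivity : 0 ≤ Q / X ^ 3)
  have hmoment := norm_integral_integral_le_card 3 ⌊X⌋₊
  simp only [e, Complex.ofReal_add, Complex.ofReal_mul, Complex.ofReal_pow,
    Complex.ofReal_natCast] at hmoment
  change ∫ α₃ in majorArcs Q (Q / X ^ 3), _ ≤ _
  calc _ ≤ ‖_‖ := Real.le_norm_self _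
    _ ≤ #(quadVinogradovSolutions 3 ⌊X⌋₊) * volume.real (majorArcs Q (Q / X ^ 3)) :=
        norm_setIntegral_le_of_norm_le_const (hvol.trans_lt ENNReal.ofReal_lt_top)
          fun α₃ _ => hmoment α₃
    _ ≤ (A * X ^ 3 * X ^ ε) * (4 * Q * (Q / X ^ 3)) := by
        gcongr
        · exact (card_quadVinogradovSolutions_three_le_rpow hε _ hN).trans (by gcongr)
        · exact ENNReal.toReal_le_of_le_ofReal (by positivity) hvol
    _ = 4 * A * Q ^ 2 * X ^ ε := by field_simp
end

section
/- Let h₂ be a nonzero integer and X ≥ 1. Then the number of integral solutions of the system |∑_{i=1}^{5}(x_i³ - y_i³)| < 3|h₂|X, ∑_{i=1}^{5}(x_i² - y_i²) = 0, ∑_{i=1}^{5}(x_i - y_i) = 0, with 1 ≤ x_i, y_i ≤ 2X (1 ≤ i ≤ 5), is ≪_ε |h₂| X^{5+ε}, assuming the tenth-moment small-cap bound ∫_{-1/X}^{1/X} ∫_0^1 ∫_0^1 |f(α; 2X)|^{10} dα ≪_ε X^{4+ε}. -/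
/-!
Integrating `|f(α; N)|^{2s}` over `α₁, α₂ ∈ [0, 1]` leaves `φ(γ) = ∑ₚ e(γ C(p))`, the sum over the
solutions `p` of the linear and quadratic equations, `C(p)` being the cubic sum; in particular
`φ ≥ 0`. With `w(c) = ∫_{-b}^{b} e(cβ) dβ = 2b sinc(2πbc)` one has
`∑ₚ w(C(p))² = ∫_{-b}^{b} ∫_{-b}^{b} φ(β - β') dβ' dβ ≤ 2b ∫_{-2b}^{2b} φ`, and Jordan's inequality
gives `w(c) ≥ 4b/π` for `|c| ≤ 1/(4b)`. Hence at most `(π²W/4) ∫_{-1/W}^{1/W} φ` solutions have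
`|C(p)| ≤ W/2`; take `W = 6|h₂|X ≥ X` and enlarge the range of integration to `[-1/X, 1/X]`.
-/

open intervalIntegral Real Finset ComplexConjugate

namespace CubicVinogradov

noncomputable def e (r : ℝ) : ℂ := Complex.exp (2 * π * Complex.I * r)

lemma e_add (r s : ℝ) : e (r + s) = e r * e s := by
  rw [e, e, e, ← Complex.exp_add]; push_cast; ring_nf

lemma e_neg (r : ℝ) : e (-r) = conj (e r) := by
  rw [e, e, ← Complex.exp_conj]; simp [map_ofNat]

lemma e_sum {ι : Type*} (s : Finset ι) (t : ι → ℝ) : e (∑ i ∈ s, t i) = ∏ i ∈ s, e (t i) := by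
  rw [e, Complex.ofReal_sum, mul_sum, Complex.exp_sum]; rfl

@[fun_prop]
lemma continuous_e : Continuous e := by unfold e; fun_prop

lemma integral_e_intMul_add (k : ℤ) (B : ℝ) :
    ∫ α in (0 : ℝ)..1, e (α * k + B) = if k = 0 then e B else 0 := by
  split_ifs with hk
  · simp [hk]
  have hc : 2 * π * Complex.I * k ≠ 0 := by simp [pi_ne_zero, hk]
  have hperiod : Complex.exp (2 * π * Complex.I * k) = 1 := by
    rw [← Complex.exp_int_mul_two_pi_mul_I k]; ring_nf
  have hlin : ∀ α : ℝ, 2 * π * Complex.I * ((α * k : ℝ) : ℂ) = 2 * π * Complex.I * k * α :=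
    fun α => by push_cast; ring
  simp_rw [e_add, intervalIntegral.integral_mul_const, e, hlin]
  simp [integral_exp_mul_complex hc, hperiod]

lemma integral_sum_e_intMul_add {ι : Type*} (P : Finset ι) (k : ι → ℤ) (B : ι → ℝ) :
    ∫ α in (0 : ℝ)..1, ∑ p ∈ P, e (α * k p + B p) = ∑ p ∈ P with k p = 0, e (B p) := by
  rw [integral_finsetSum fun p _ => (by fun_prop : Continuous _).intervalIntegrable 0 1,
    sum_filter]
  exact sum_congr rfl fun p _ => integral_e_intMul_add (k p) (B p)

lemma ofReal_norm_pow_two_mul (z : ℂ) (s : ℕ) : ((‖z‖ ^ (2 * s) : ℝ) : ℂ) = z ^ s * conj z ^ s := by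
  rw [← mul_pow, Complex.mul_conj, Complex.normSq_eq_norm_sq, pow_mul]; push_cast; rfl

lemma ofReal_norm_sum_e_pow_two_mul {α : Type*} (S : Finset α) (φ : α → ℝ) (s : ℕ) :
    ((‖∑ x ∈ S, e (φ x)‖ ^ (2 * s) : ℝ) : ℂ) =
      ∑ p ∈ Fintype.piFinset (fun _ : Fin s => S) ×ˢ Fintype.piFinset (fun _ : Fin s => S),
        e (∑ i, φ (p.1 i) - ∑ i, φ (p.2 i)) := by
  have hpow : ∀ ψ : α → ℝ, (∑ x ∈ S, e (ψ x)) ^ s =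
      ∑ x ∈ Fintype.piFinset (fun _ : Fin s => S), e (∑ i, ψ (x i)) := fun ψ => by
    rw [← Fin.prod_const, prod_univ_sum]; simp only [e_sum]
  rw [ofReal_norm_pow_two_mul, map_sum]
  simp_rw [← e_neg]
  rw [hpow, hpow, sum_mul_sum, sum_product]
  simp_rw [sub_eq_add_neg, e_add, sum_neg_distrib]

noncomputable def tupleBox (s : ℕ) (N : ℤ) : Finset ((Fin s → ℤ) × (Fin s → ℤ)) :=
  Fintype.piFinset (fun _ => Icc 1 N) ×ˢ Fintype.piFinset (fun _ => Icc 1 N)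

def powerSumDiff {s : ℕ} (k : ℕ) (p : (Fin s → ℤ) × (Fin s → ℤ)) : ℤ :=
  ∑ i, (p.1 i ^ k - p.2 i ^ k)

noncomputable def linQuadSolutions (s : ℕ) (N : ℤ) : Finset ((Fin s → ℤ) × (Fin s → ℤ)) :=
  {p ∈ tupleBox s N | powerSumDiff 1 p = 0 ∧ powerSumDiff 2 p = 0}

noncomputable def cubicWeylSum (S : Finset ℤ) (α₁ α₂ α₃ : ℝ) : ℂ :=
  ∑ x ∈ S, e (α₁ * x + α₂ * x ^ 2 + α₃ * x ^ 3)

lemma ofReal_norm_cubicWeylSum_pow (s : ℕ) (N : ℤ) (α₁ α₂ γ : ℝ) :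
    ((‖cubicWeylSum (Icc 1 N) α₁ α₂ γ‖ ^ (2 * s) : ℝ) : ℂ) =
      ∑ p ∈ tupleBox s N,
        e (α₁ * powerSumDiff 1 p + (α₂ * powerSumDiff 2 p + γ * powerSumDiff 3 p)) := by
  rw [cubicWeylSum, ofReal_norm_sum_e_pow_two_mul, tupleBox]
  refine sum_congr rfl fun p _ => congrArg e ?_
  simp only [powerSumDiff, Int.cast_sum, Int.cast_sub, Int.cast_pow, pow_one, mul_sum,
    ← sum_sub_distrib, ← sum_add_distrib]
  exact sum_congr rfl fun i _ => by ring

lemma ofReal_integral_integral_norm_cubicWeylSum_pow (s : ℕ) (N : ℤ) (γ : ℝ) :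
    ((∫ α₂ in (0 : ℝ)..1, ∫ α₁ in (0 : ℝ)..1, ‖cubicWeylSum (Icc 1 N) α₁ α₂ γ‖ ^ (2 * s) : ℝ) : ℂ) =
      ∑ p ∈ linQuadSolutions s N, e (γ * powerSumDiff 3 p) := by
  simp_rw [← intervalIntegral.integral_ofReal, ofReal_norm_cubicWeylSum_pow,
    integral_sum_e_intMul_add]
  rw [linQuadSolutions, filter_filter]

lemma integral_e_mul (b c : ℝ) :
    ∫ β in -b..b, e (c * β) = ((2 * b * sinc (2 * π * b * c) : ℝ) : ℂ) := by
  rcases eq_or_ne c 0 with rfl | hc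
  · simp [e]; ring
  rcases eq_or_ne b 0 with rfl | hb
  · simp
  have hk : 2 * π * Complex.I * c ≠ 0 := by simp [pi_ne_zero, hc]
  have hθ : 2 * π * b * c ≠ 0 := by simp [pi_ne_zero, hb, hc]
  simp_rw [e, Complex.ofReal_mul, ← mul_assoc]
  rw [integral_exp_mul_complex hk, sinc_of_ne_zero hθ]
  have hb' : 2 * π * Complex.I * c * b = (2 * π * b * c : ℝ) * Complex.I := by push_cast; ring
  have hb'' : 2 * π * Complex.I * c * (-b : ℝ) = (-(2 * π * b * c) : ℝ) * Complex.I := by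
    push_cast; ring
  rw [hb', hb'', Complex.exp_mul_I, Complex.exp_mul_I, Complex.ofReal_neg, Complex.cos_neg,
    Complex.sin_neg]
  have hbC : (b : ℂ) ≠ 0 := by exact_mod_cast hb
  have hcC : (c : ℂ) ≠ 0 := by exact_mod_cast hc
  have hπC : (π : ℂ) ≠ 0 := by exact_mod_cast pi_ne_zero
  push_cast
  field_simp
  ring

lemma two_div_pi_le_sinc {x : ℝ} (hx : |x| ≤ π / 2) : 2 / π ≤ sinc x := by
  rcases eq_or_ne x 0 with rfl | hx0
  · rw [sinc_zero, div_le_one pi_pos]; linarith [pi_gt_three]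
  have habs : sinc x = sinc |x| := by rcases abs_cases x with ⟨h, _⟩ | ⟨h, _⟩ <;> simp [h]
  rw [habs, sinc_of_ne_zero (abs_ne_zero.mpr hx0), le_div_iff₀ (abs_pos.mpr hx0)]
  exact mul_le_sin (abs_nonneg x) hx

section Kernel

variable {ι : Type*} (T : Finset ι) (c : ι → ℝ)

lemma norm_sum_mul_e_le_integral_norm_sum_e {b β : ℝ} (hβ : β ∈ Set.Icc (-b) b) :
    ‖∑ p ∈ T, ((2 * b * sinc (2 * π * b * c p) : ℝ) : ℂ) * e (c p * β)‖ ≤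
      ∫ γ in -(2 * b)..2 * b, ‖∑ p ∈ T, e (γ * c p)‖ := by
  have hconv : ∑ p ∈ T, ((2 * b * sinc (2 * π * b * c p) : ℝ) : ℂ) * e (c p * β) =
      ∫ β' in -b..b, ∑ p ∈ T, e ((β - β') * c p) := by
    rw [integral_finsetSum fun p _ => (by fun_prop : Continuous _).intervalIntegrable _ _]
    refine sum_congr rfl fun p _ => ?_
    simp_rw [show ∀ β', (β - β') * c p = c p * β + -c p * β' from fun β' => by ring, e_add,
      intervalIntegral.integral_const_mul, integral_e_mul, mul_neg, sinc_neg, mul_comm]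
  have hb : -b ≤ b := hβ.1.trans hβ.2
  rw [hconv]
  calc _ ≤ ∫ β' in -b..b, ‖∑ p ∈ T, e ((β - β') * c p)‖ := norm_integral_le_integral_norm hb
    _ = ∫ γ in β - b..β + b, ‖∑ p ∈ T, e (γ * c p)‖ := by
      rw [integral_comp_sub_left (fun γ => ‖∑ p ∈ T, e (γ * c p)‖) β, sub_neg_eq_add]
    _ ≤ _ := integral_mono_interval (by linarith [hβ.1]) (by linarith) (by linarith [hβ.2])
      (Filter.Eventually.of_forall fun _ => norm_nonneg _)
      ((by fun_prop : Continuous _).intervalIntegrable _ _)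

lemma sum_sq_sinc_le_integral_norm_sum_e {b : ℝ} (hb : 0 ≤ b) :
    ∑ p ∈ T, (2 * b * sinc (2 * π * b * c p)) ^ 2 ≤
      2 * b * ∫ γ in -(2 * b)..2 * b, ‖∑ p ∈ T, e (γ * c p)‖ := by
  have hsum : ((∑ p ∈ T, (2 * b * sinc (2 * π * b * c p)) ^ 2 : ℝ) : ℂ) =
      ∫ β in -b..b, ∑ p ∈ T, ((2 * b * sinc (2 * π * b * c p) : ℝ) : ℂ) * e (c p * β) := by
    rw [integral_finsetSum fun p _ => (by fun_prop : Continuous _).intervalIntegrable _ _]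
    simp_rw [intervalIntegral.integral_const_mul, integral_e_mul, ← Complex.ofReal_mul, sq]
    push_cast; rfl
  calc _ ≤ ‖((∑ p ∈ T, (2 * b * sinc (2 * π * b * c p)) ^ 2 : ℝ) : ℂ)‖ := by
        rw [Complex.norm_real, Real.norm_eq_abs]; exact le_abs_self _
    _ ≤ (∫ γ in -(2 * b)..2 * b, ‖∑ p ∈ T, e (γ * c p)‖) * |b - -b| := by
      rw [hsum]
      refine norm_integral_le_of_norm_le_const fun β hβ => ?_
      rw [Set.uIoc_of_le (by linarith)] at hβ
      exact norm_sum_mul_e_le_integral_norm_sum_e T c (Set.Ioc_subset_Icc_self hβ)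
    _ = _ := by rw [abs_of_nonneg (by linarith)]; ring

lemma card_filter_abs_le_le_integral_norm_sum_e {W : ℝ} (hW : 0 < W) :
    (#{p ∈ T | |c p| ≤ W / 2} : ℝ) ≤
      π ^ 2 * W / 4 * ∫ γ in -(1 / W)..1 / W, ‖∑ p ∈ T, e (γ * c p)‖ := by
  obtain ⟨b, hb, rfl⟩ : ∃ b, 0 < b ∧ W = 1 / (2 * b) := ⟨1 / (2 * W), by positivity, by field_simp⟩
  rw [one_div_one_div]
  set M := ∫ γ in -(2 * b)..2 * b, ‖∑ p ∈ T, e (γ * c p)‖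
  have hlower : ∀ p ∈ T.filter (fun p => |c p| ≤ 1 / (2 * b) / 2),
      (4 * b / π) ^ 2 ≤ (2 * b * sinc (2 * π * b * c p)) ^ 2 := by
    intro p hp
    have hsinc : 2 / π ≤ sinc (2 * π * b * c p) := by
      refine two_div_pi_le_sinc ?_
      rw [abs_mul, abs_of_pos (by positivity)]
      calc _ ≤ 2 * π * b * (1 / (2 * b) / 2) := by gcongr; exact (mem_filter.mp hp).2
        _ = π / 2 := by field_simp
    calc (4 * b / π) ^ 2 = (2 * b * (2 / π)) ^ 2 := by ring
      _ ≤ _ := by gcongr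
  have hsum : (#{p ∈ T | |c p| ≤ 1 / (2 * b) / 2} : ℝ) * (4 * b / π) ^ 2 ≤ 2 * b * M :=
    calc _ = ∑ p ∈ T with |c p| ≤ 1 / (2 * b) / 2, (4 * b / π) ^ 2 := by
          rw [sum_const, nsmul_eq_mul]
      _ ≤ ∑ p ∈ T with |c p| ≤ 1 / (2 * b) / 2, (2 * b * sinc (2 * π * b * c p)) ^ 2 :=
          sum_le_sum hlower
      _ ≤ ∑ p ∈ T, (2 * b * sinc (2 * π * b * c p)) ^ 2 :=
          sum_le_sum_of_subset_of_nonneg (filter_subset _ _) fun _ _ _ => sq_nonneg _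
      _ ≤ _ := sum_sq_sinc_le_integral_norm_sum_e T c hb.le
  generalize (#{p ∈ T | |c p| ≤ 1 / (2 * b) / 2} : ℝ) = n at hsum ⊢
  calc n = n * (4 * b / π) ^ 2 * (π / (4 * b)) ^ 2 := by field_simp
    _ ≤ 2 * b * M * (π / (4 * b)) ^ 2 := by gcongr
    _ = _ := by field_simp; ring

end Kernel

lemma sum_Icc_one_natFloor {M : Type*} [AddCommMonoid M] (y : ℝ) (g : ℤ → M) :
    ∑ n ∈ Icc 1 ⌊y⌋₊, g n = ∑ x ∈ Icc 1 ⌊y⌋, g x := by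
  refine (sum_map (Icc 1 ⌊y⌋₊) Nat.castEmbedding g).symm.trans ?_
  congr 1
  ext x
  simp only [mem_map, mem_Icc, Nat.castEmbedding_apply]
  constructor
  · rintro ⟨n, ⟨hn1, hny⟩, rfl⟩
    refine ⟨by exact_mod_cast hn1, Int.le_floor.mpr ?_⟩
    exact_mod_cast (Nat.le_floor_iff' (by omega)).mp hny
  · rintro ⟨hx1, hxy⟩
    lift x to ℕ using (by omega)
    refine ⟨x, ⟨by exact_mod_cast hx1, (Nat.le_floor_iff' (by omega)).mpr ?_⟩, rfl⟩
    exact_mod_cast Int.le_floor.mp hxy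

lemma sum_Icc_cexp_eq_cubicWeylSum (y α₁ α₂ α₃ : ℝ) :
    ∑ x ∈ Icc 1 ⌊y⌋₊,
        Complex.exp (2 * π * Complex.I * ((α₁ : ℂ) * x + (α₂ : ℂ) * x ^ 2 + (α₃ : ℂ) * x ^ 3)) =
      cubicWeylSum (Icc 1 ⌊y⌋) α₁ α₂ α₃ := by
  rw [cubicWeylSum, ← sum_Icc_one_natFloor]
  push_cast [e]
  rfl

lemma integral_norm_sum_e_le_integral_norm_cubicWeylSum_pow (s : ℕ) (N : ℤ) {X W : ℝ}
    (hX : 0 < X) (hXW : X ≤ W) :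
    ∫ γ in -(1 / W)..1 / W, ‖∑ p ∈ linQuadSolutions s N, e (γ * powerSumDiff 3 p)‖ ≤
      ∫ γ in -(1 / X)..1 / X, ∫ α₂ in (0 : ℝ)..1, ∫ α₁ in (0 : ℝ)..1,
        ‖cubicWeylSum (Icc 1 N) α₁ α₂ γ‖ ^ (2 * s) := by
  have hmoment : ∀ γ, ∫ α₂ in (0 : ℝ)..1, ∫ α₁ in (0 : ℝ)..1,
      ‖cubicWeylSum (Icc 1 N) α₁ α₂ γ‖ ^ (2 * s) =
        ‖∑ p ∈ linQuadSolutions s N, e (γ * powerSumDiff 3 p)‖ := fun γ => by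
    rw [← ofReal_integral_integral_norm_cubicWeylSum_pow, Complex.norm_real,
      Real.norm_of_nonneg (integral_nonneg zero_le_one fun _ _ =>
        integral_nonneg zero_le_one fun _ _ => by positivity)]
  simp_rw [hmoment]
  have hWX : 1 / W ≤ 1 / X := one_div_le_one_div_of_le hX hXW
  exact integral_mono_interval (by linarith) (by linarith [one_div_pos.mpr (hX.trans_le hXW)]) hWX
    (Filter.Eventually.of_forall fun _ => norm_nonneg _)
    ((by fun_prop : Continuous _).intervalIntegrable _ _)

end CubicVinogradov

open CubicVinogradov

theorem count_U1_bound_general (h₂ : ℤ) (hh₂ : h₂ ≠ 0) (ε : ℝ)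
    (hcap : ∃ C₁ : ℝ, 0 < C₁ ∧ ∀ X : ℝ, 1 ≤ X →
      (∫ α₃ in (-(1 / X) : ℝ)..(1 / X), ∫ α₂ in (0:ℝ)..1, ∫ α₁ in (0:ℝ)..1,
          ‖∑ x ∈ Finset.Icc 1 ⌊2 * X⌋₊,
              Complex.exp (2 * Real.pi * Complex.I *
                ((α₁ : ℂ) * (x : ℂ) + (α₂ : ℂ) * (x : ℂ) ^ 2 +
                  (α₃ : ℂ) * (x : ℂ) ^ 3))‖ ^ 10)
        ≤ C₁ * X ^ ((4 : ℝ) + ε)) :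
    ∃ C : ℝ, 0 < C ∧ ∀ X : ℝ, 1 ≤ X →
      ((Finset.filter
          (fun p : (Fin 5 → ℤ) × (Fin 5 → ℤ) =>
            (|(∑ i, ((p.1 i) ^ 3 - (p.2 i) ^ 3) : ℤ)| : ℝ) < 3 * |(h₂ : ℝ)| * X ∧
            (∑ i, ((p.1 i) ^ 2 - (p.2 i) ^ 2)) = 0 ∧
            (∑ i, (p.1 i - p.2 i)) = 0)
          ((Fintype.piFinset fun _ : Fin 5 => Finset.Icc 1 ⌊2 * X⌋) ×ˢ
            (Fintype.piFinset fun _ : Fin 5 => Finset.Icc 1 ⌊2 * X⌋))).card : ℝ)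
        ≤ C * |(h₂ : ℝ)| * X ^ ((5 : ℝ) + ε) := by
  obtain ⟨C₁, hC₁, hmoment⟩ := hcap
  refine ⟨3 * π ^ 2 / 2 * C₁, by positivity, fun X hX => ?_⟩
  have hX0 : 0 < X := one_pos.trans_le hX
  set W := 6 * |(h₂ : ℝ)| * X with hW
  have hXW : X ≤ W := by
    have : (1 : ℝ) ≤ |(h₂ : ℝ)| := by exact_mod_cast Int.one_le_abs hh₂
    nlinarith
  have hint := (integral_norm_sum_e_le_integral_norm_cubicWeylSum_pow 5 ⌊2 * X⌋ hX0 hXW).trans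
    (by simpa only [sum_Icc_cexp_eq_cubicWeylSum] using hmoment X hX)
  calc (_ : ℝ) ≤ #{p ∈ linQuadSolutions 5 ⌊2 * X⌋ | |(powerSumDiff 3 p : ℝ)| ≤ W / 2} := by
        refine Nat.cast_le.mpr (card_le_card fun p hp => ?_)
        simp only [mem_filter, linQuadSolutions, tupleBox, powerSumDiff, pow_one] at hp ⊢
        exact ⟨⟨hp.1, hp.2.2.2, hp.2.2.1⟩, by push_cast at hp ⊢; linarith [hp.2.1]⟩
    _ ≤ π ^ 2 * W / 4 * C₁ * X ^ ((4 : ℝ) + ε) := by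
      rw [mul_assoc _ C₁]
      exact (card_filter_abs_le_le_integral_norm_sum_e _ _ (by linarith)).trans
        (by gcongr)
    _ = _ := by
      rw [show (5 : ℝ) + ε = 4 + ε + 1 by ring, rpow_add_one hX0.ne', hW]
      ring

theorem count_U1_bound (h₂ : ℤ) (hh₂ : h₂ ≠ 0) (ε : ℝ) (hε : 0 < ε)
    (hcap : ∃ C₁ : ℝ, 0 < C₁ ∧ ∀ X : ℝ, 1 ≤ X →
      (∫ α₃ in (-(1 / X) : ℝ)..(1 / X), ∫ α₂ in (0:ℝ)..1, ∫ α₁ in (0:ℝ)..1,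
          ‖∑ x ∈ Finset.Icc 1 ⌊2 * X⌋₊,
              Complex.exp (2 * Real.pi * Complex.I *
                ((α₁ : ℂ) * (x : ℂ) + (α₂ : ℂ) * (x : ℂ) ^ 2 +
                  (α₃ : ℂ) * (x : ℂ) ^ 3))‖ ^ 10)
        ≤ C₁ * X ^ ((4 : ℝ) + ε)) :
    ∃ C : ℝ, 0 < C ∧ ∀ X : ℝ, 1 ≤ X →
      ((Finset.filter
          (fun p : (Fin 5 → ℤ) × (Fin 5 → ℤ) =>
            (|(∑ i, ((p.1 i) ^ 3 - (p.2 i) ^ 3) : ℤ)| : ℝ) < 3 * |(h₂ : ℝ)| * X ∧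
            (∑ i, ((p.1 i) ^ 2 - (p.2 i) ^ 2)) = 0 ∧
            (∑ i, (p.1 i - p.2 i)) = 0)
          ((Fintype.piFinset fun _ : Fin 5 => Finset.Icc 1 ⌊2 * X⌋) ×ˢ
            (Fintype.piFinset fun _ : Fin 5 => Finset.Icc 1 ⌊2 * X⌋))).card : ℝ)
        ≤ C * |(h₂ : ℝ)| * X ^ ((5 : ℝ) + ε) :=
  count_U1_bound_general h₂ hh₂ ε hcap
end
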